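/- Let Γ be a group and let f : Γ → ℂ be a parallelogram function. Then for all γ, δ ∈ Γ and all n ∈ ℤ: (1) f(γⁿ) = n²·f(γ); (2) f(γδ) = f(δγ); (3) f(γδγ⁻¹δ⁻¹) = 0. -/

import Mathlib

/-!
Setting `x = y = 1` and then `x = 1` in the parallelogram law gives `f 1 = 0` and `f y⁻¹ = f y`;
comparing the law for `(x, y)` and `(y, x)` then shows that `f` is a class function. The law for
`(γⁿ⁺¹, γ)` is the recursion `a (n + 2) = 2 a (n + 1) - a n + 2 a 1` solved by `a n = n² a 1`.
For the commutator, the law for `(xy, yx)` reads `f (xyyx) + f ⁅x, y⁆ = 4 f (xy)`, and two more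
instances of the law evaluate the conjugate `f (yyxx)` of `f (xyyx)` as `4 f (xy)` as well.
-/

def IsParallelogramFunction {Γ R : Type*} [Group Γ] [CommRing R] (f : Γ → R) : Prop :=
  ∀ x y : Γ, f (x * y) + f (x * y⁻¹) = 2 * f x + 2 * f y

namespace IsParallelogramFunction

open scoped commutatorElement

variable {Γ R : Type*} [Group Γ] [CommRing R] [IsAddTorsionFree R] {f : Γ → R}

theorem map_one (hf : IsParallelogramFunction f) : f 1 = 0 := by
  have h := hf 1 1
  simp only [mul_one, inv_one] at h
  rw [← two_nsmul_eq_zero, two_nsmul]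
  linear_combination -h

theorem map_inv (hf : IsParallelogramFunction f) (y : Γ) : f y⁻¹ = f y := by
  have h := hf 1 y
  simp only [one_mul] at h
  linear_combination h + 2 * hf.map_one

theorem map_mul_comm (hf : IsParallelogramFunction f) (x y : Γ) : f (x * y) = f (y * x) := by
  have hinv : f (x * y⁻¹) = f (y * x⁻¹) := by
    rw [← hf.map_inv (y * x⁻¹), mul_inv_rev, inv_inv]
  linear_combination hf x y - hf y x - hinv

theorem map_conj (hf : IsParallelogramFunction f) (x y : Γ) : f (x * y * x⁻¹) = f y := by
  rw [mul_assoc, hf.map_mul_comm, inv_mul_cancel_right]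

theorem map_pow (hf : IsParallelogramFunction f) (γ : Γ) (n : ℕ) :
    f (γ ^ n) = (n : R) ^ 2 * f γ := by
  induction n using Nat.twoStepInduction with
  | zero => simp [hf.map_one]
  | one => simp
  | more n ih₀ ih₁ =>
    have h := hf (γ ^ (n + 1)) γ
    rw [← pow_succ, pow_succ γ n, mul_inv_cancel_right, ← pow_succ] at h
    push_cast at ih₁ ⊢
    linear_combination h + 2 * ih₁ - ih₀

theorem map_zpow (hf : IsParallelogramFunction f) (γ : Γ) (n : ℤ) :
    f (γ ^ n) = (n : R) ^ 2 * f γ := by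
  obtain ⟨m, rfl | rfl⟩ := Int.eq_nat_or_neg n
  · rw [zpow_natCast, hf.map_pow, Int.cast_natCast]
  · rw [zpow_neg, zpow_natCast, hf.map_inv, hf.map_pow, Int.cast_neg, Int.cast_natCast, neg_sq]

theorem map_mul_self (hf : IsParallelogramFunction f) (x : Γ) : f (x * x) = 4 * f x := by
  have h := hf x x
  rw [mul_inv_cancel, hf.map_one] at h
  linear_combination h

theorem map_mul_self_mul (hf : IsParallelogramFunction f) (x y : Γ) :
    f (y * y * x) = 2 * f y + 2 * f (x * y) - f x := by
  have h := hf y (y * x)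
  rw [← mul_assoc, mul_inv_rev, ← mul_assoc, hf.map_conj, hf.map_inv, hf.map_mul_comm y x] at h
  linear_combination h

theorem map_mul_self_mul_mul_self (hf : IsParallelogramFunction f) (x y : Γ) :
    f (y * y * (x * x)) = 4 * f (x * y) := by
  have h := hf (y * y * x) x
  rw [mul_inv_cancel_right, hf.map_mul_self] at h
  rw [← mul_assoc]
  linear_combination h + 2 * hf.map_mul_self_mul x y

theorem map_commutatorElement (hf : IsParallelogramFunction f) (x y : Γ) : f ⁅x, y⁆ = 0 := by
  have h := hf (x * y) (y * x)
  have hconj : f (x * y * (y * x)) = f (y * y * (x * x)) := by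
    rw [← hf.map_conj x⁻¹, inv_inv]
    group
  rw [hconj, hf.map_mul_self_mul_mul_self, mul_inv_rev, ← mul_assoc, ← commutatorElement_def,
    hf.map_mul_comm y x] at h
  linear_combination h

end IsParallelogramFunction

theorem parallelogram_elementary_identities {Γ : Type*} [Group Γ] (f : Γ → ℂ)
    (hf : ∀ x y : Γ, f (x * y) + f (x * y⁻¹) = 2 * f x + 2 * f y) :
    (∀ (γ : Γ) (n : ℤ), f (γ ^ n) = (n : ℂ) ^ 2 * f γ) ∧
    (∀ γ δ : Γ, f (γ * δ) = f (δ * γ)) ∧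
    (∀ γ δ : Γ, f (γ * δ * γ⁻¹ * δ⁻¹) = 0) := by
  have hf : IsParallelogramFunction f := hf
  exact ⟨hf.map_zpow, hf.map_mul_comm, hf.map_commutatorElement⟩
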